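/- Let p ∈ [0,1], T ∈ [0,1], S ∈ (0,1]. There exist unit vectors ψ, φ in a finite-dimensional complex Hilbert space and complementary orthogonal projections Π_1, Π_2 (Π_1 + Π_2 = 1) with |⟨φ,ψ⟩|² = T, |⟨φ,Π_1ψ⟩|² + |⟨φ,Π_2ψ⟩|² = S, and |⟨φ,Π_1ψ⟩|² = p·S, if and only if |√p − √(1−p)| ≤ √(T/S) ≤ √p + √(1−p) ≤ 1/√S. -/

import Mathlib

/-!
Write `a = ⟪φ, Π₁ψ⟫` and `b = ⟪φ, Π₂ψ⟫`, so that `a + b = ⟪φ, ψ⟫`, `|a| = √p √S`,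
`|b| = √(1 - p) √S` and `|a + b| = √T`. After multiplying by `√S` the conditions read
`||a| - |b|| ≤ |a + b| ≤ |a| + |b| ≤ 1`: triangle inequalities, and Cauchy–Schwarz applied twice.
Conversely, given `u, v ≥ 0` with `u + v ≤ 1` there are unit vectors `x, y ∈ ℝ²` with
`x₁ y₁ = u`, `x₂ y₂ = v`, and by the intermediate value theorem a phase `z` with `|u + v z| = t`
for any `t` between `|u - v|` and `u + v`; then `φ = (y₁, y₂)`, `ψ = (x₁, x₂ z)` in `ℂ²` with the
coordinate projections is a model.
-/

open scoped InnerProductSpace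

/-- A quantum-mechanical model of a dichotomic projective measurement with postselection,
realizing outcome probability `p`, transition probability `T`, and success probability `S`. -/
structure DichotomicModel (p T S : ℝ) where
  H : Type
  [normed : NormedAddCommGroup H]
  [inner_ : InnerProductSpace ℂ H]
  [findim : FiniteDimensional ℂ H]
  ψ : H
  φ : H
  Pr₁ : H →ₗ[ℂ] H
  Pr₂ : H →ₗ[ℂ] H
  norm_ψ : ‖ψ‖ = 1
  norm_φ : ‖φ‖ = 1
  sa₁ : Pr₁.IsSymmetric
  sa₂ : Pr₂.IsSymmetric
  idem₁ : Pr₁ ∘ₗ Pr₁ = Pr₁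
  idem₂ : Pr₂ ∘ₗ Pr₂ = Pr₂
  sum_eq : Pr₁ + Pr₂ = LinearMap.id
  hT : ‖⟪φ, ψ⟫_ℂ‖ ^ 2 = T
  hS : ‖⟪φ, Pr₁ ψ⟫_ℂ‖ ^ 2 + ‖⟪φ, Pr₂ ψ⟫_ℂ‖ ^ 2 = S
  hp : ‖⟪φ, Pr₁ ψ⟫_ℂ‖ ^ 2 = p * S

open Real

section SymmetricIdempotent

variable {𝕜 E : Type*} [RCLike 𝕜] [NormedAddCommGroup E] [InnerProductSpace 𝕜 E]

theorem LinearMap.IsSymmetric.inner_map_map_of_idem {P : E →ₗ[𝕜] E} (hP : P.IsSymmetric)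
    (hPP : P ∘ₗ P = P) (x y : E) : ⟪P x, P y⟫_𝕜 = ⟪x, P y⟫_𝕜 := by
  rw [hP x (P y), ← LinearMap.comp_apply, hPP]

theorem LinearMap.IsSymmetric.norm_inner_map_le_of_idem {P : E →ₗ[𝕜] E} (hP : P.IsSymmetric)
    (hPP : P ∘ₗ P = P) (x y : E) : ‖⟪x, P y⟫_𝕜‖ ≤ ‖P x‖ * ‖P y‖ := by
  rw [← hP.inner_map_map_of_idem hPP]
  exact norm_inner_le_norm _ _

theorem LinearMap.IsSymmetric.norm_sq_add_norm_sq_of_add_eq_id {P Q : E →ₗ[𝕜] E}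
    (hP : P.IsSymmetric) (hPP : P ∘ₗ P = P) (hQ : Q.IsSymmetric) (hQQ : Q ∘ₗ Q = Q)
    (hPQ : P + Q = LinearMap.id) (x : E) : ‖P x‖ ^ 2 + ‖Q x‖ ^ 2 = ‖x‖ ^ 2 := by
  have hx : P x + Q x = x := by simpa using LinearMap.congr_fun hPQ x
  rw [← inner_self_eq_norm_sq (𝕜 := 𝕜), ← inner_self_eq_norm_sq (𝕜 := 𝕜),
    ← inner_self_eq_norm_sq (𝕜 := 𝕜), hP.inner_map_map_of_idem hPP,
    hQ.inner_map_map_of_idem hQQ, ← map_add, ← inner_add_right, hx]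

end SymmetricIdempotent

namespace DichotomicModel

variable {p T S : ℝ} (M : DichotomicModel p T S)

instance : NormedAddCommGroup M.H := M.normed
instance : InnerProductSpace ℂ M.H := M.inner_

theorem inner_Pr₁_add_inner_Pr₂ : ⟪M.φ, M.Pr₁ M.ψ⟫_ℂ + ⟪M.φ, M.Pr₂ M.ψ⟫_ℂ = ⟪M.φ, M.ψ⟫_ℂ := by
  rw [← inner_add_right, ← LinearMap.add_apply, M.sum_eq, LinearMap.id_apply]

theorem S_nonneg (M : DichotomicModel p T S) : 0 ≤ S := M.hS ▸ by positivity

theorem norm_inner_Pr₁ : ‖⟪M.φ, M.Pr₁ M.ψ⟫_ℂ‖ = √p * √S := by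
  rw [← sqrt_mul' p M.S_nonneg, ← M.hp, sqrt_sq (norm_nonneg _)]

theorem norm_inner_Pr₂ : ‖⟪M.φ, M.Pr₂ M.ψ⟫_ℂ‖ = √(1 - p) * √S := by
  rw [← sqrt_mul' _ M.S_nonneg, ← sqrt_sq (norm_nonneg ⟪M.φ, M.Pr₂ M.ψ⟫_ℂ)]
  congr 1
  linear_combination M.hS - M.hp

theorem norm_inner : ‖⟪M.φ, M.ψ⟫_ℂ‖ = √T := by
  rw [← sqrt_sq (norm_nonneg ⟪M.φ, M.ψ⟫_ℂ), M.hT]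

/-- Cauchy–Schwarz twice: `|⟪φ, Πₖψ⟫| ≤ ‖Πₖφ‖ ‖Πₖψ‖`, and `(‖Π₁φ‖, ‖Π₂φ‖)`, `(‖Π₁ψ‖, ‖Π₂ψ‖)`
are unit vectors of `ℝ²`. -/
theorem norm_inner_Pr₁_add_norm_inner_Pr₂_le_one :
    ‖⟪M.φ, M.Pr₁ M.ψ⟫_ℂ‖ + ‖⟪M.φ, M.Pr₂ M.ψ⟫_ℂ‖ ≤ 1 := by
  have hφ := M.sa₁.norm_sq_add_norm_sq_of_add_eq_id M.idem₁ M.sa₂ M.idem₂ M.sum_eq M.φ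
  have hψ := M.sa₁.norm_sq_add_norm_sq_of_add_eq_id M.idem₁ M.sa₂ M.idem₂ M.sum_eq M.ψ
  rw [M.norm_φ] at hφ
  rw [M.norm_ψ] at hψ
  have h₁ := M.sa₁.norm_inner_map_le_of_idem M.idem₁ M.φ M.ψ
  have h₂ := M.sa₂.norm_inner_map_le_of_idem M.idem₂ M.φ M.ψ
  nlinarith [sq_nonneg (‖M.Pr₁ M.φ‖ - ‖M.Pr₁ M.ψ‖), sq_nonneg (‖M.Pr₂ M.φ‖ - ‖M.Pr₂ M.ψ‖)]

theorem sqrt_conditions (M : DichotomicModel p T S) :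
    |√p * √S - √(1 - p) * √S| ≤ √T ∧ √T ≤ √p * √S + √(1 - p) * √S ∧
      √p * √S + √(1 - p) * √S ≤ 1 := by
  rw [← M.norm_inner_Pr₁, ← M.norm_inner_Pr₂, ← M.norm_inner, ← M.inner_Pr₁_add_inner_Pr₂]
  refine ⟨?_, norm_add_le _ _, M.norm_inner_Pr₁_add_norm_inner_Pr₂_le_one⟩
  simpa using abs_norm_sub_norm_le ⟪M.φ, M.Pr₁ M.ψ⟫_ℂ (-⟪M.φ, M.Pr₂ M.ψ⟫_ℂ)

end DichotomicModel

/-- With `x = (cos a, sin a)` and `y = (cos b, sin b)` one needs `cos (a - b) = u + v` and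
`cos (a + b) = u - v`, which `arccos` solves. -/
theorem exists_sq_add_sq_eq_one_mul_eq {u v : ℝ} (h : |u| + |v| ≤ 1) :
    ∃ x₁ x₂ y₁ y₂ : ℝ, x₁ ^ 2 + x₂ ^ 2 = 1 ∧ y₁ ^ 2 + y₂ ^ 2 = 1 ∧ x₁ * y₁ = u ∧ x₂ * y₂ = v := by
  obtain ⟨hadd₁, hadd₂⟩ := abs_le.mp ((abs_add_le u v).trans h)
  obtain ⟨hsub₁, hsub₂⟩ := abs_le.mp ((abs_sub u v).trans h)
  set a := (arccos (u - v) + arccos (u + v)) / 2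
  set b := (arccos (u - v) - arccos (u + v)) / 2
  have hsub : cos (a - b) = u + v := by
    rw [show a - b = arccos (u + v) by ring, cos_arccos hadd₁ hadd₂]
  have hadd : cos (a + b) = u - v := by
    rw [show a + b = arccos (u - v) by ring, cos_arccos hsub₁ hsub₂]
  rw [cos_sub] at hsub
  rw [cos_add] at hadd
  exact ⟨cos a, sin a, cos b, sin b, cos_sq_add_sin_sq a, cos_sq_add_sin_sq b,
    by linarith, by linarith⟩

theorem exists_norm_eq_one_norm_add_mul_eq {u v t : ℝ} (ht : t ∈ Set.Icc |u - v| |u + v|) :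
    ∃ z : ℂ, ‖z‖ = 1 ∧ ‖(u : ℂ) + v * z‖ = t := by
  let f : ℝ → ℝ := fun θ ↦ ‖(u : ℂ) + v * Complex.exp (θ * Complex.I)‖
  have hf : ContinuousOn f (Set.Icc 0 π) := by fun_prop
  have hf₀ : f 0 = |u + v| := by simp [f, ← Complex.ofReal_add, Complex.norm_real]
  have hfπ : f π = |u - v| := by
    simp [f, Complex.exp_pi_mul_I, ← sub_eq_add_neg, ← Complex.ofReal_sub, Complex.norm_real]
  obtain ⟨θ, -, hθ⟩ := intermediate_value_Icc' pi_pos.le hf (hf₀ ▸ hfπ ▸ ht)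
  exact ⟨_, Complex.norm_exp_ofReal_mul_I θ, hθ⟩

namespace EuclideanSpace

variable {𝕜 ι : Type*} [RCLike 𝕜] [DecidableEq ι]

noncomputable def coordProj (k : ι) : EuclideanSpace 𝕜 ι →ₗ[𝕜] EuclideanSpace 𝕜 ι :=
  (projₗ k).smulRight (single k 1)

@[simp]
theorem coordProj_apply (k : ι) (x : EuclideanSpace 𝕜 ι) : coordProj k x = single k (x k) := by
  ext i
  by_cases h : i = k <;> simp [coordProj, h]

theorem isSymmetric_coordProj [Fintype ι] (k : ι) :
    (coordProj k : EuclideanSpace 𝕜 ι →ₗ[𝕜] _).IsSymmetric := by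
  intro x y
  simp [inner_single_left, inner_single_right, mul_comm]

theorem coordProj_comp_self (k : ι) :
    (coordProj k : EuclideanSpace 𝕜 ι →ₗ[𝕜] _) ∘ₗ coordProj k = coordProj k := by
  ext x : 1
  simp

theorem sum_coordProj [Fintype ι] :
    ∑ k : ι, (coordProj k : EuclideanSpace 𝕜 ι →ₗ[𝕜] _) = LinearMap.id := by
  ext x i : 2
  simp [LinearMap.sum_apply]

end EuclideanSpace

open EuclideanSpace in
theorem nonempty_dichotomicModel_of_norms {p T S u v t : ℝ} (hu : 0 ≤ u) (hv : 0 ≤ v)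
    (huv : u + v ≤ 1) (ht₁ : |u - v| ≤ t) (ht₂ : t ≤ u + v) (hpS : u ^ 2 = p * S)
    (hqS : v ^ 2 = (1 - p) * S) (htT : t ^ 2 = T) : Nonempty (DichotomicModel p T S) := by
  obtain ⟨x₁, x₂, y₁, y₂, hx, hy, hxy₁, hxy₂⟩ := exists_sq_add_sq_eq_one_mul_eq (u := u) (v := v)
    (by rwa [abs_of_nonneg hu, abs_of_nonneg hv])
  obtain ⟨z, hz, hzt⟩ := exists_norm_eq_one_norm_add_mul_eq (u := u) (v := v)
    ⟨ht₁, by rwa [abs_of_nonneg (add_nonneg hu hv)]⟩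
  let ψ : EuclideanSpace ℂ (Fin 2) := !₂[x₁, x₂ * z]
  let φ : EuclideanSpace ℂ (Fin 2) := !₂[y₁, y₂]
  have h₁ : ⟪φ, coordProj 0 ψ⟫_ℂ = u := by
    simp [φ, ψ, inner_single_right, ← hxy₁, mul_comm]
  have h₂ : ⟪φ, coordProj 1 ψ⟫_ℂ = v * z := by
    simp [φ, ψ, inner_single_right, ← hxy₂]
    ring
  have h : ⟪φ, ψ⟫_ℂ = u + v * z := by
    simp [φ, ψ, PiLp.inner_apply, ← hxy₁, ← hxy₂]
    ring
  refine ⟨{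
      H := EuclideanSpace ℂ (Fin 2), ψ := ψ, φ := φ, Pr₁ := coordProj 0, Pr₂ := coordProj 1
      sa₁ := isSymmetric_coordProj 0, sa₂ := isSymmetric_coordProj 1
      idem₁ := coordProj_comp_self 0, idem₂ := coordProj_comp_self 1
      sum_eq := by simpa [Fin.sum_univ_two] using sum_coordProj (𝕜 := ℂ) (ι := Fin 2)
      norm_ψ := ?_, norm_φ := ?_, hT := ?_, hS := ?_, hp := ?_ }⟩
  · simp [ψ, EuclideanSpace.norm_eq, hz, hx]
  · simp [φ, EuclideanSpace.norm_eq, hy]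
  · rw [h, hzt, htT]
  · rw [h₁, h₂, norm_mul, hz, mul_one, Complex.norm_real, Complex.norm_real,
      Real.norm_of_nonneg hu, Real.norm_of_nonneg hv, hpS, hqS]
    ring
  · rw [h₁, Complex.norm_real, Real.norm_of_nonneg hu, hpS]

theorem sqrt_conditions_iff {p T S : ℝ} (hS : 0 < S) :
    (|√p - √(1 - p)| ≤ √(T / S) ∧ √(T / S) ≤ √p + √(1 - p) ∧ √p + √(1 - p) ≤ 1 / √S) ↔
      (|√p * √S - √(1 - p) * √S| ≤ √T ∧ √T ≤ √p * √S + √(1 - p) * √S ∧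
        √p * √S + √(1 - p) * √S ≤ 1) := by
  have hS' : 0 < √S := sqrt_pos.mpr hS
  rw [sqrt_div' T hS.le, le_div_iff₀ hS', div_le_iff₀ hS', le_div_iff₀ hS', ← sub_mul, ← add_mul,
    abs_mul, abs_of_pos hS']

theorem stmt_16_general (p T S : ℝ) (hp0 : 0 ≤ p) (hp1 : p ≤ 1) (hT0 : 0 ≤ T)
    (hS0 : 0 < S) :
    Nonempty (DichotomicModel p T S) ↔
      (|Real.sqrt p - Real.sqrt (1 - p)| ≤ Real.sqrt (T / S) ∧
       Real.sqrt (T / S) ≤ Real.sqrt p + Real.sqrt (1 - p) ∧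
       Real.sqrt p + Real.sqrt (1 - p) ≤ 1 / Real.sqrt S) := by
  rw [sqrt_conditions_iff hS0]
  refine ⟨fun ⟨M⟩ ↦ M.sqrt_conditions, fun ⟨h₁, h₂, h₃⟩ ↦ ?_⟩
  have hS' : √S ^ 2 = S := sq_sqrt hS0.le
  exact nonempty_dichotomicModel_of_norms (by positivity) (by positivity) h₃ h₁ h₂
    (by rw [mul_pow, sq_sqrt hp0, hS']) (by rw [mul_pow, sq_sqrt (sub_nonneg.mpr hp1), hS'])
    (sq_sqrt hT0)

theorem stmt_16 (p T S : ℝ) (hp0 : 0 ≤ p) (hp1 : p ≤ 1) (hT0 : 0 ≤ T) (hT1 : T ≤ 1)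
    (hS0 : 0 < S) (hS1 : S ≤ 1) :
    Nonempty (DichotomicModel p T S) ↔
      (|Real.sqrt p - Real.sqrt (1 - p)| ≤ Real.sqrt (T / S) ∧
       Real.sqrt (T / S) ≤ Real.sqrt p + Real.sqrt (1 - p) ∧
       Real.sqrt p + Real.sqrt (1 - p) ≤ 1 / Real.sqrt S) :=
  stmt_16_general p T S hp0 hp1 hT0 hS0
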